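/- Fix v > 0. For each z ∈ ℂ with Im z ≠ 0, there exists exactly one w ∈ ℂ satisfying w = 1/(−z − v² w) together with Im w · Im z > 0, and this unique solution equals the Stieltjes transform of the semicircle distribution: w = ∫_{−2v}^{2v} (λ − z)^{−1} ρ_sc(λ) dλ, where ρ_sc(λ) = (1/(2πv²))·√(4v² − λ²) for |λ| ≤ 2v. -/

import Mathlib

/-!
Substituting `λ = 2v sin θ` turns `∫ √(4v² - λ²) (λ - z)⁻¹ dλ` into `(4v² - z²) J - π z` with
`J = ∫_{-π/2}^{π/2} (2v sin θ - z)⁻¹ dθ`. The Weierstrass substitution `θ = 2 arctan t` and partial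
fractions write `J` as `r⁻¹ L`, where `r² = 4v² - z²` and `L` is a combination of four logarithms
with `exp L = -1` and `|Im L| < 2π`, so `L² = -π²`. Knowing only `J²` avoids choosing a branch of
the square root, and it already shows that the Stieltjes transform `G` solves
`v² G² + z G + 1 = 0`, i.e. the fixed-point equation.

Since `Im (λ - z)⁻¹ = Im z / |λ - z|²`, `Im G · Im z ≥ 0`, and `Im G ≠ 0` because no real number
solves the quadratic. The other root is `(v² G)⁻¹`, whose imaginary part has the opposite sign,
so `G` is the only admissible solution.
-/

open Complex Real MeasureTheory

theorem ofReal_sub_ne_zero_of_im_ne_zero {c : ℂ} (hc : c.im ≠ 0) (t : ℝ) : (t : ℂ) - c ≠ 0 :=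
  fun h ↦ hc (by simpa using (congrArg im h).symm)

theorem continuous_inv_ofReal_sub {c : ℂ} (hc : c.im ≠ 0) :
    Continuous fun t : ℝ ↦ ((t : ℂ) - c)⁻¹ :=
  (continuous_ofReal.sub continuous_const).inv₀ (ofReal_sub_ne_zero_of_im_ne_zero hc)

theorem integral_inv_ofReal_sub {c : ℂ} (hc : c.im ≠ 0) (a b : ℝ) :
    ∫ t in a..b, ((t : ℂ) - c)⁻¹ = log (b - c) - log (a - c) := by
  refine intervalIntegral.integral_eq_sub_of_hasDerivAt (f := fun t : ℝ ↦ log ((t : ℂ) - c))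
    (fun t _ ↦ ?_) ((continuous_inv_ofReal_sub hc).intervalIntegrable _ _)
  have hslit : (t : ℂ) - c ∈ slitPlane := mem_slitPlane_iff.2 (Or.inr (by simpa using hc))
  simpa using ((hasDerivAt_id t).ofReal_comp.sub_const c).clog_real hslit

theorem abs_im_log_sub_log_lt_pi {x y : ℂ} (h : 0 < x.im * y.im) :
    |(log x - log y).im| < π := by
  have hx : x.im ≠ 0 := left_ne_zero_of_mul h.ne'
  have hy : y.im ≠ 0 := right_ne_zero_of_mul h.ne'
  have hxπ := arg_lt_pi_iff.2 (Or.inr hx)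
  have hyπ := arg_lt_pi_iff.2 (Or.inr hy)
  simp only [sub_im, log_im, abs_lt]
  rcases lt_or_gt_of_ne hx with hx' | hx'
  · have hxa := arg_neg_iff.2 hx'
    have hya := arg_neg_iff.2 (neg_of_mul_pos_right h hx'.le)
    constructor <;> linarith [neg_pi_lt_arg x, neg_pi_lt_arg y]
  · have hxa := arg_nonneg_iff.2 hx'.le
    have hya := arg_nonneg_iff.2 (pos_of_mul_pos_right h hx'.le).le
    constructor <;> linarith

theorem sq_eq_neg_pi_sq_of_exp_eq_neg_one {L : ℂ} (h : exp L = -1) (hL : |L.im| < 2 * π) :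
    L ^ 2 = -(π : ℂ) ^ 2 := by
  obtain ⟨n, hn⟩ := exp_eq_exp_iff_exists_int.1 (h.trans exp_pi_mul_I.symm)
  have hLn : L = (2 * n + 1 : ℤ) * (π * I) := by rw [hn]; push_cast; ring
  have hodd : |((2 * n + 1 : ℤ) : ℝ)| < 2 := by
    rw [hLn] at hL
    simp only [mul_im, intCast_re, intCast_im, ofReal_re, ofReal_im, I_re, I_im] at hL
    rw [abs_lt] at hL ⊢
    constructor <;> nlinarith [pi_pos]
  have hsq : (2 * n + 1) ^ 2 = 1 := by
    have := abs_lt.1 hodd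
    have h1 : -2 < 2 * n + 1 := by exact_mod_cast this.1
    have h2 : 2 * n + 1 < 2 := by exact_mod_cast this.2
    obtain rfl | rfl : n = 0 ∨ n = -1 := by omega
    all_goals norm_num
  rw [hLn, mul_pow, ← Int.cast_pow, hsq, mul_pow, I_sq]
  push_cast; ring

theorem Real.sin_two_mul_arctan (t : ℝ) : Real.sin (2 * Real.arctan t) = 2 * t / (1 + t ^ 2) := by
  have hsq : √(1 + t ^ 2) ^ 2 = 1 + t ^ 2 := sq_sqrt (by positivity)
  rw [sin_two_mul, sin_arctan, cos_arctan]
  field_simp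
  rw [hsq]

theorem integral_comp_two_mul_arctan {E : Type*} [NormedAddCommGroup E] [NormedSpace ℝ E]
    {g : ℝ → E} (hg : Continuous g) :
    ∫ θ in -(π / 2)..π / 2, g θ =
      ∫ t in (-1 : ℝ)..1, (2 / (1 + t ^ 2)) • g (2 * Real.arctan t) := by
  have hderiv : ∀ t ∈ Set.uIcc (-1 : ℝ) 1,
      HasDerivAt (fun t ↦ 2 * Real.arctan t) (2 / (1 + t ^ 2)) t :=
    fun t _ ↦ by simpa [div_eq_mul_inv] using (hasDerivAt_arctan t).const_mul 2
  have hcont : ContinuousOn (fun t : ℝ ↦ 2 / (1 + t ^ 2)) (Set.uIcc (-1) 1) :=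
    (continuous_const.div (by fun_prop) fun t ↦ by positivity).continuousOn
  have h := intervalIntegral.integral_deriv_smul_comp hderiv hcont hg
  rw [arctan_neg, arctan_one, show 2 * -(π / 4) = -(π / 2) by ring,
    show 2 * (π / 4) = π / 2 by ring] at h
  exact h.symm

theorem sq_integral_inv_sub_sub_inv_sub_of_mul_eq_one {t₁ t₂ : ℂ} (h₁ : t₁.im ≠ 0)
    (h₂ : t₂.im ≠ 0) (h : t₁ * t₂ = 1) :
    (∫ t in (-1 : ℝ)..1, (((t : ℂ) - t₂)⁻¹ - ((t : ℂ) - t₁)⁻¹)) ^ 2 = -(π : ℂ) ^ 2 := by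
  rw [intervalIntegral.integral_sub ((continuous_inv_ofReal_sub h₂).intervalIntegrable _ _)
    ((continuous_inv_ofReal_sub h₁).intervalIntegrable _ _), integral_inv_ofReal_sub h₂,
    integral_inv_ofReal_sub h₁]
  push_cast
  refine sq_eq_neg_pi_sq_of_exp_eq_neg_one ?_ ?_
  · have hp₁ : 1 - t₁ ≠ 0 := by simpa using ofReal_sub_ne_zero_of_im_ne_zero h₁ 1
    have hm₁ : -1 - t₁ ≠ 0 := by simpa using ofReal_sub_ne_zero_of_im_ne_zero h₁ (-1)
    have hp₂ : 1 - t₂ ≠ 0 := by simpa using ofReal_sub_ne_zero_of_im_ne_zero h₂ 1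
    have hm₂ : -1 - t₂ ≠ 0 := by simpa using ofReal_sub_ne_zero_of_im_ne_zero h₂ (-1)
    rw [Complex.exp_sub, Complex.exp_sub, Complex.exp_sub, Complex.exp_log hp₁,
      Complex.exp_log hm₁, Complex.exp_log hp₂, Complex.exp_log hm₂]
    field_simp
    linear_combination 2 * h
  · have hlog : ∀ {c : ℂ}, c.im ≠ 0 → |(log (1 - c) - log (-1 - c)).im| < π := fun hc ↦
      abs_im_log_sub_log_lt_pi (by simpa using mul_self_pos.2 hc)
    rw [sub_im]
    linarith [abs_sub _ _ |>.trans_lt (add_lt_add (hlog h₂) (hlog h₁))]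

theorem ofReal_sq_sub_sq_ne_zero (a : ℝ) {z : ℂ} (hz : z.im ≠ 0) : (a : ℂ) ^ 2 - z ^ 2 ≠ 0 := by
  rw [sq_sub_sq]
  exact mul_ne_zero
    (by simpa using ofReal_sub_ne_zero_of_im_ne_zero (c := -z) (by simpa using hz) a)
    (ofReal_sub_ne_zero_of_im_ne_zero hz a)

theorem im_ne_zero_of_mul_sq_add_one_eq {a : ℝ} {z t : ℂ} (hz : z.im ≠ 0)
    (ht : z * (t ^ 2 + 1) = 2 * a * t) : t.im ≠ 0 := by
  intro htim
  obtain ⟨x, rfl⟩ : ∃ x : ℝ, t = x := ⟨t.re, Complex.ext rfl (by simpa using htim)⟩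
  have h : ((x ^ 2 + 1 : ℝ) : ℂ) * z = ((2 * a * x : ℝ) : ℂ) := by
    push_cast; linear_combination ht
  have h' := congrArg im h
  rw [im_ofReal_mul, ofReal_im] at h'
  exact hz ((mul_eq_zero.1 h').resolve_left (by positivity))

theorem sq_integral_inv_mul_sin_sub (a : ℝ) {z : ℂ} (hz : z.im ≠ 0) :
    (z ^ 2 - a ^ 2) * (∫ θ in -(π / 2)..π / 2, (((a * Real.sin θ : ℝ) : ℂ) - z)⁻¹) ^ 2
      = π ^ 2 := by
  have hz0 : z ≠ 0 := fun h ↦ hz (by simp [h])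
  obtain ⟨r, hr⟩ := IsAlgClosed.exists_eq_mul_self ((a : ℂ) ^ 2 - z ^ 2)
  have hr0 : r ≠ 0 := by
    rintro rfl
    exact ofReal_sq_sub_sq_ne_zero a hz (by rw [hr, mul_zero])
  -- `t₁, t₂` are the roots of `z t² - 2a t + z`, the denominator left by `θ = 2 arctan t`.
  obtain ⟨t₁, ht₁⟩ : ∃ t, t = (a + r) / z := ⟨_, rfl⟩
  obtain ⟨t₂, ht₂⟩ : ∃ t, t = (a - r) / z := ⟨_, rfl⟩
  have him₁ : t₁.im ≠ 0 :=
    im_ne_zero_of_mul_sq_add_one_eq hz (by rw [ht₁]; field_simp; linear_combination -hr)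
  have him₂ : t₂.im ≠ 0 :=
    im_ne_zero_of_mul_sq_add_one_eq hz (by rw [ht₂]; field_simp; linear_combination -hr)
  have hprod : t₁ * t₂ = 1 := by rw [ht₁, ht₂]; field_simp; linear_combination hr
  have hpartial : ∀ t : ℝ, (2 / (1 + t ^ 2)) • (((a * Real.sin (2 * Real.arctan t) : ℝ) : ℂ) - z)⁻¹
      = r⁻¹ * (((t : ℂ) - t₂)⁻¹ - ((t : ℂ) - t₁)⁻¹) := by
    intro t
    have h₁ := ofReal_sub_ne_zero_of_im_ne_zero him₁ t
    have h₂ := ofReal_sub_ne_zero_of_im_ne_zero him₂ t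
    have hden := ofReal_sub_ne_zero_of_im_ne_zero hz (a * (2 * t / (1 + t ^ 2)))
    have hpos : (1 : ℂ) + t ^ 2 ≠ 0 := by exact_mod_cast (by positivity : (1 : ℝ) + t ^ 2 ≠ 0)
    rw [Real.sin_two_mul_arctan, real_smul]
    push_cast at hden ⊢
    subst ht₁ ht₂
    have h₁' : (t : ℂ) * z - (a + r) ≠ 0 := fun h ↦ h₁ (by field_simp; linear_combination h)
    have h₂' : (t : ℂ) * z - (a - r) ≠ 0 := fun h ↦ h₂ (by field_simp; linear_combination h)
    have hden' : 2 * t * a - (1 + t ^ 2) * z ≠ 0 :=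
      fun h ↦ hden (by field_simp; linear_combination h)
    field_simp
    linear_combination 2 * r * hr
  rw [integral_comp_two_mul_arctan (g := fun θ ↦ (((a * Real.sin θ : ℝ) : ℂ) - z)⁻¹)
    ((continuous_inv_ofReal_sub hz).comp (by fun_prop))]
  simp only [hpartial, intervalIntegral.integral_const_mul, mul_pow,
    sq_integral_inv_sub_sub_inv_sub_of_mul_eq_one him₁ him₂ hprod]
  field_simp
  linear_combination hr

theorem integral_sqrt_sq_sub_sq_mul_inv_sub {R : ℝ} (hR : 0 ≤ R) {z : ℂ} (hz : z.im ≠ 0) :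
    ∫ l in -R..R, (√(R ^ 2 - l ^ 2) : ℂ) * ((l : ℂ) - z)⁻¹ =
      (R ^ 2 - z ^ 2) * (∫ θ in -(π / 2)..π / 2, (((R * Real.sin θ : ℝ) : ℂ) - z)⁻¹) - π * z := by
  have hne := ofReal_sub_ne_zero_of_im_ne_zero hz
  have hsubst := intervalIntegral.integral_deriv_smul_comp (a := -(π / 2)) (b := π / 2)
    (f := fun θ ↦ R * Real.sin θ) (f' := fun θ ↦ R * Real.cos θ)
    (g := fun l : ℝ ↦ (√(R ^ 2 - l ^ 2) : ℂ) * ((l : ℂ) - z)⁻¹)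
    (fun θ _ ↦ (Real.hasDerivAt_sin θ).const_mul R) (by fun_prop)
    (by fun_prop (disch := exact hne _))
  simp only [Real.sin_neg, Real.sin_pi_div_two, mul_neg, mul_one] at hsubst
  rw [← hsubst]
  have hintegrand : Set.EqOn
      (fun θ ↦ (R * Real.cos θ) • ((fun l : ℝ ↦ (√(R ^ 2 - l ^ 2) : ℂ) * ((l : ℂ) - z)⁻¹) ∘
        fun θ ↦ R * Real.sin θ) θ)
      (fun θ ↦ (R ^ 2 - z ^ 2) * (((R * Real.sin θ : ℝ) : ℂ) - z)⁻¹ -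
        (((R * Real.sin θ : ℝ) : ℂ) + z)) (Set.uIcc (-(π / 2)) (π / 2)) := by
    intro θ hθ
    rw [Set.uIcc_of_le (by linarith [pi_pos])] at hθ
    have hsqrt : √(R ^ 2 - (R * Real.sin θ) ^ 2) = R * Real.cos θ := by
      rw [← sqrt_sq (mul_nonneg hR (cos_nonneg_of_mem_Icc hθ))]
      congr 1
      linear_combination -R ^ 2 * Real.sin_sq_add_cos_sq θ
    have hX := hne (R * Real.sin θ)
    simp only [Function.comp_apply, hsqrt, real_smul]
    push_cast at hX ⊢
    field_simp
    linear_combination (R : ℂ) ^ 2 * Complex.sin_sq_add_cos_sq (θ : ℂ)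
  rw [intervalIntegral.integral_congr hintegrand, intervalIntegral.integral_sub,
    intervalIntegral.integral_const_mul, intervalIntegral.integral_add,
    intervalIntegral.integral_ofReal, intervalIntegral.integral_const_mul, integral_sin]
  · simp
  all_goals exact Continuous.intervalIntegrable (by fun_prop (disch := exact fun _ ↦ hne _)) _ _

theorem im_integral_inv_sub_mul_mul_im_nonneg {μ : Measure ℝ} {f : ℝ → ℝ}
    (hf : ∀ l, 0 ≤ f l) (z : ℂ) :
    0 ≤ (∫ l, ((l : ℂ) - z)⁻¹ * (f l : ℂ) ∂μ).im * z.im := by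
  by_cases hint : Integrable (fun l : ℝ ↦ ((l : ℂ) - z)⁻¹ * (f l : ℂ)) μ
  · have him : ∀ l : ℝ, (((l : ℂ) - z)⁻¹ * (f l : ℂ)).im = z.im * (f l / normSq ((l : ℂ) - z)) := by
      intro l
      rw [mul_im, ofReal_im, ofReal_re, inv_im, sub_im, ofReal_im]
      ring
    rw [← imCLM_apply, ← imCLM.integral_comp_comm hint]
    simp only [imCLM_apply, him, integral_const_mul]
    have := integral_nonneg (μ := μ) (f := fun l : ℝ ↦ f l / normSq ((l : ℂ) - z))
      fun l ↦ div_nonneg (hf l) (normSq_nonneg _)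
    nlinarith [mul_self_nonneg z.im]
  · simp [integral_undef hint]

theorem eq_one_div_neg_sub_mul_iff {c z w : ℂ} (hz : z ≠ 0) :
    w = 1 / (-z - c * w) ↔ c * w ^ 2 + z * w + 1 = 0 := by
  constructor
  · intro h
    have hden : -z - c * w ≠ 0 := by
      intro hden
      rw [hden, div_zero] at h
      rw [h, mul_zero, sub_zero, neg_eq_zero] at hden
      exact hz hden
    rw [eq_div_iff hden] at h
    linear_combination -h
  · intro h
    exact eq_one_div_of_mul_eq_one_left (by linear_combination -h)

theorem im_ne_zero_of_quadratic (v : ℝ) {z w : ℂ} (hz : z.im ≠ 0)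
    (h : (v : ℂ) ^ 2 * w ^ 2 + z * w + 1 = 0) : w.im ≠ 0 := by
  intro hw
  obtain ⟨x, rfl⟩ : ∃ x : ℝ, w = x := ⟨w.re, Complex.ext rfl (by simpa using hw)⟩
  have h' : (((v * x) ^ 2 + 1 : ℝ) : ℂ) + x * z = 0 := by push_cast; linear_combination h
  have him := congrArg im h'
  rw [add_im, ofReal_im, im_ofReal_mul, zero_add, zero_im] at him
  have hx : x = 0 := (mul_eq_zero.1 him).resolve_right hz
  simp [hx] at h'

theorem eq_of_quadratic_of_im_mul_im_pos {v : ℝ} (hv : v ≠ 0) {z w₁ w₂ : ℂ}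
    (h₁ : (v : ℂ) ^ 2 * w₁ ^ 2 + z * w₁ + 1 = 0) (h₂ : (v : ℂ) ^ 2 * w₂ ^ 2 + z * w₂ + 1 = 0)
    (hs₁ : 0 < w₁.im * z.im) (hs₂ : 0 < w₂.im * z.im) : w₁ = w₂ := by
  have hfac : (w₁ - w₂) * ((v : ℂ) ^ 2 * (w₁ + w₂) + z) = 0 := by linear_combination h₁ - h₂
  refine sub_eq_zero.1 ((mul_eq_zero.1 hfac).resolve_right fun hsum ↦ ?_)
  have hw₁ : w₁ ≠ 0 := fun h ↦ by simp [h] at hs₁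
  have hw₂ : w₂ = ((v : ℂ) ^ 2 * w₁)⁻¹ :=
    eq_inv_of_mul_eq_one_right (by linear_combination w₁ * hsum - h₁)
  have hN : 0 < normSq ((v : ℂ) ^ 2 * w₁) := normSq_pos.2 (by simp [hv, hw₁])
  have hv2 : ((v : ℂ) ^ 2 * w₁).im = v ^ 2 * w₁.im := by
    rw [← ofReal_pow, im_ofReal_mul]
  rw [hw₂, inv_im, hv2] at hs₂
  have hratio : 0 < v ^ 2 / normSq ((v : ℂ) ^ 2 * w₁) := by positivity
  have hneg : -(v ^ 2 * w₁.im) / normSq ((v : ℂ) ^ 2 * w₁) * z.im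
      = -(v ^ 2 / normSq ((v : ℂ) ^ 2 * w₁)) * (w₁.im * z.im) := by ring
  rw [hneg] at hs₂
  linarith [mul_pos hratio hs₁]

noncomputable def semicircleStieltjes (v : ℝ) (z : ℂ) : ℂ :=
  ∫ l in Set.Icc (-(2 * v)) (2 * v),
    ((l : ℂ) - z)⁻¹ * ((1 / (2 * π * v ^ 2) * √(4 * v ^ 2 - l ^ 2) : ℝ) : ℂ)

theorem semicircleStieltjes_eq {v : ℝ} (hv : 0 < v) (z : ℂ) :
    semicircleStieltjes v z = (2 * π * v ^ 2 : ℂ)⁻¹ *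
      ∫ l in -(2 * v)..2 * v, (√((2 * v) ^ 2 - l ^ 2) : ℂ) * ((l : ℂ) - z)⁻¹ := by
  rw [semicircleStieltjes, integral_Icc_eq_integral_Ioc,
    ← intervalIntegral.integral_of_le (by linarith), ← intervalIntegral.integral_const_mul]
  refine intervalIntegral.integral_congr fun l _ ↦ ?_
  push_cast
  ring_nf

theorem semicircleStieltjes_quadratic {v : ℝ} (hv : 0 < v) {z : ℂ} (hz : z.im ≠ 0) :
    (v : ℂ) ^ 2 * semicircleStieltjes v z ^ 2 + z * semicircleStieltjes v z + 1 = 0 := by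
  have hF := integral_sqrt_sq_sub_sq_mul_inv_sub (by positivity : 0 ≤ 2 * v) hz
  have hJ := sq_integral_inv_mul_sin_sub (2 * v) hz
  set J := ∫ θ in -(π / 2)..π / 2, (((2 * v * Real.sin θ : ℝ) : ℂ) - z)⁻¹
  rw [semicircleStieltjes_eq hv, hF]
  have hv0 : (v : ℂ) ≠ 0 := ofReal_ne_zero.2 hv.ne'
  have hπ : (π : ℂ) ≠ 0 := ofReal_ne_zero.2 pi_ne_zero
  push_cast at hJ ⊢
  field_simp
  linear_combination (z ^ 2 - 4 * (v : ℂ) ^ 2) * hJ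

/-- For `v > 0` and non-real `z`, the equation `w = 1/(-z - v²w)` has exactly one
solution with `Im w · Im z > 0`, and this solution is the Stieltjes transform of the
semicircle distribution of parameter `v`:
`w = ∫_{-2v}^{2v} (λ - z)⁻¹ ρ_sc(λ) dλ` with `ρ_sc(λ) = (2πv²)⁻¹ √(4v² - λ²)`. -/
theorem semicircle_stieltjes_transform (v : ℝ) (hv : 0 < v) (z : ℂ) (hz : z.im ≠ 0) :
    (∃! w : ℂ, w = 1 / (-z - v ^ 2 * w) ∧ 0 < w.im * z.im) ∧
    (∀ w : ℂ, w = 1 / (-z - v ^ 2 * w) ∧ 0 < w.im * z.im →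
      w = ∫ l in Set.Icc (-(2 * v)) (2 * v),
            ((l : ℂ) - z)⁻¹ *
              ((1 / (2 * Real.pi * v ^ 2) * Real.sqrt (4 * v ^ 2 - l ^ 2) : ℝ) : ℂ)) := by
  have hz0 : z ≠ 0 := fun h ↦ hz (by simp [h])
  have hG := semicircleStieltjes_quadratic hv hz
  have hpos : 0 < (semicircleStieltjes v z).im * z.im :=
    (im_integral_inv_sub_mul_mul_im_nonneg (fun l ↦ by positivity) z).lt_of_ne'
      (mul_ne_zero (im_ne_zero_of_quadratic v hz hG) hz)
  have huniq : ∀ w : ℂ, w = 1 / (-z - v ^ 2 * w) ∧ 0 < w.im * z.im →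
      w = semicircleStieltjes v z := fun w ⟨hw, hwpos⟩ ↦
    eq_of_quadratic_of_im_mul_im_pos hv.ne' ((eq_one_div_neg_sub_mul_iff hz0).1 hw) hG hwpos hpos
  exact ⟨⟨_, ⟨(eq_one_div_neg_sub_mul_iff hz0).2 hG, hpos⟩, huniq⟩, huniq⟩
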